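/- Let f : ℝ^n × ℝ^m → ℝ^n be continuously differentiable, let u, v : ℝ → ℝ^m be continuous, let s₀ ∈ ℝ^n, let T > 0 and δ > 0. Suppose S : (−δ,δ) × [0,T] → ℝ^n is continuous, satisfies the integral equation S(ε,t) = s₀ + ∫₀^t f(S(ε,t'), u(t') + ε·v(t')) dt' for all ε ∈ (−δ,δ) and t ∈ [0,T], and that the partial derivative ∂_ε S exists and is continuous on (−δ,δ) × [0,T]. Then the first variation z(t) := ∂_ε S(ε,t)|_{ε=0} satisfies the time-varying linear Volterra integral equation z(t) = ∫₀^t [A(t')·z(t') + B(t')·v(t')] dt' for all t ∈ [0,T], where A(t') = ∂f/∂s evaluated at (S(0,t'), u(t')) and B(t') = ∂f/∂u evaluated at (S(0,t'), u(t')). -/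

import Mathlib

/-!
Write `S(ε,t) = s₀ + ∫₀ᵗ F(ε,t') dt'` with `F(ε,t') = f(S(ε,t'), u(t') + ε v(t'))`. By the chain
rule `∂_ε F(ε,t') = Df(S(ε,t'), u(t') + ε v(t')) (∂_ε S(ε,t'), v(t'))`, which is jointly continuous,
hence bounded on a compact neighbourhood of `ε = 0` times `[0,t]`. Dominated convergence therefore
allows differentiating under the integral sign at `ε = 0`, and splitting `Df` into its two partial
derivatives gives the linear Volterra equation for `∂_ε S(0,·)`.
-/

open MeasureTheory Set Filter Topology Interval

theorem fderiv_apply_prodMk_eq_add {𝕜 E F G : Type*} [NontriviallyNormedField 𝕜]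
    [NormedAddCommGroup E] [NormedSpace 𝕜 E] [NormedAddCommGroup F] [NormedSpace 𝕜 F]
    [NormedAddCommGroup G] [NormedSpace 𝕜 G] {f : E × F → G} {p : E × F}
    (hf : DifferentiableAt 𝕜 f p) (a : E) (b : F) :
    fderiv 𝕜 f p (a, b) =
      fderiv 𝕜 (fun y => f (y, p.2)) p.1 a + fderiv 𝕜 (fun w => f (p.1, w)) p.2 b := by
  have hleft : HasFDerivAt (fun y => f (y, p.2)) ((fderiv 𝕜 f p).comp (.inl 𝕜 E F)) p.1 :=
    hf.hasFDerivAt.comp p.1 (hasFDerivAt_prodMk_left p.1 p.2)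
  have hright : HasFDerivAt (fun w => f (p.1, w)) ((fderiv 𝕜 f p).comp (.inr 𝕜 E F)) p.2 :=
    hf.hasFDerivAt.comp p.2 (hasFDerivAt_prodMk_right p.1 p.2)
  rw [hleft.fderiv, hright.fderiv]
  exact ((fderiv 𝕜 f p).comp_inl_add_comp_inr (a, b)).symm

theorem intervalIntegral.hasDerivAt_integral_of_continuousOn {𝕜 E : Type*} [RCLike 𝕜]
    [NormedAddCommGroup E] [NormedSpace ℝ E] [NormedSpace 𝕜 E] {F F' : 𝕜 → ℝ → E}
    {x₀ : 𝕜} {K : Set 𝕜} {a b : ℝ} (hK : IsCompact K) (hK₀ : K ∈ 𝓝 x₀)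
    (hF : ContinuousOn (Function.uncurry F) (K ×ˢ [[a, b]]))
    (hF' : ContinuousOn (Function.uncurry F') (K ×ˢ [[a, b]]))
    (hderiv : ∀ x ∈ K, ∀ t ∈ [[a, b]], HasDerivAt (F · t) (F' x t) x) :
    HasDerivAt (fun x => ∫ t in a..b, F x t) (∫ t in a..b, F' x₀ t) x₀ := by
  obtain ⟨C, hC⟩ := (hK.prod isCompact_uIcc).exists_bound_of_continuousOn hF'
  have hx₀ : x₀ ∈ K := mem_of_mem_nhds hK₀
  have hIoc : Ι a b ⊆ [[a, b]] := uIoc_subset_uIcc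
  exact (hasDerivAt_integral_of_dominated_loc_of_deriv_le (bound := fun _ => C) hK₀
    (eventually_of_mem hK₀ fun x hx =>
      ((hF.uncurry_left x hx).mono hIoc).aestronglyMeasurable measurableSet_uIoc)
    ((hF.uncurry_left x₀ hx₀).intervalIntegrable)
    (((hF'.uncurry_left x₀ hx₀).mono hIoc).aestronglyMeasurable measurableSet_uIoc)
    (ae_of_all _ fun t ht x hx => hC (x, t) ⟨hx, hIoc ht⟩) intervalIntegrable_const
    (ae_of_all _ fun t ht x hx => hderiv x hx t (hIoc ht))).2

theorem first_variation_satisfies_linear_volterra_general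
    (n m : ℕ)
    (f : EuclideanSpace ℝ (Fin n) × EuclideanSpace ℝ (Fin m) → EuclideanSpace ℝ (Fin n))
    (hf : ContDiff ℝ 1 f)
    (u v : ℝ → EuclideanSpace ℝ (Fin m)) (hu : Continuous u) (hv : Continuous v)
    (s₀ : EuclideanSpace ℝ (Fin n)) (T δ : ℝ) (hδ : 0 < δ)
    (S : ℝ → ℝ → EuclideanSpace ℝ (Fin n))
    (hS_cont : ContinuousOn (fun p : ℝ × ℝ => S p.1 p.2)
      (Set.Ioo (-δ) δ ×ˢ Set.Icc 0 T))
    (hS_eq : ∀ ε ∈ Set.Ioo (-δ) δ, ∀ t ∈ Set.Icc (0:ℝ) T,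
      S ε t = s₀ + ∫ t' in (0:ℝ)..t, f (S ε t', u t' + ε • v t'))
    (Z : ℝ → ℝ → EuclideanSpace ℝ (Fin n))
    (hZ : ∀ ε ∈ Set.Ioo (-δ) δ, ∀ t ∈ Set.Icc (0:ℝ) T,
      HasDerivAt (fun e => S e t) (Z ε t) ε)
    (hZ_cont : ContinuousOn (fun p : ℝ × ℝ => Z p.1 p.2)
      (Set.Ioo (-δ) δ ×ˢ Set.Icc 0 T)) :
    ∀ t ∈ Set.Icc (0:ℝ) T,
      Z 0 t = ∫ t' in (0:ℝ)..t,
        ((fderiv ℝ (fun y => f (y, u t')) (S 0 t')) (Z 0 t')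
          + (fderiv ℝ (fun w => f (S 0 t', w)) (u t')) (v t')) := by
  intro t ht
  have hdf : Differentiable ℝ f := hf.differentiable one_ne_zero
  have h0 : (0 : ℝ) ∈ Ioo (-δ) δ := ⟨neg_lt_zero.2 hδ, hδ⟩
  have hK : Icc (-(δ / 2)) (δ / 2) ⊆ Ioo (-δ) δ := Icc_subset_Ioo (by linarith) (by linarith)
  have hI : [[0, t]] ⊆ Icc 0 T := by
    rw [uIcc_of_le ht.1]
    exact Icc_subset_Icc_right ht.2
  have hKI : Icc (-(δ / 2)) (δ / 2) ×ˢ [[0, t]] ⊆ Ioo (-δ) δ ×ˢ Icc 0 T := prod_mono hK hI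
  have hF_deriv : ∀ x ∈ Ioo (-δ) δ, ∀ t' ∈ Icc 0 T,
      HasDerivAt (fun e => f (S e t', u t' + e • v t'))
        (fderiv ℝ f (S x t', u t' + x • v t') (Z x t', v t')) x := fun x hx t' ht' =>
    (hdf _).hasFDerivAt.comp_hasDerivAt x <| (hZ x hx t' ht').prodMk <| by
      simpa using ((hasDerivAt_id x).smul_const (v t')).const_add (u t')
  have hLeibniz := intervalIntegral.hasDerivAt_integral_of_continuousOn
    (x₀ := 0) (F := fun e t' => f (S e t', u t' + e • v t'))
    (F' := fun e t' => fderiv ℝ f (S e t', u t' + e • v t') (Z e t', v t'))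
    isCompact_Icc (Icc_mem_nhds (by linarith) (by linarith))
    (hf.continuous.comp_continuousOn ((hS_cont.mono hKI).prodMk (by fun_prop)))
    ((hf.continuous_fderiv one_ne_zero).comp_continuousOn
      ((hS_cont.mono hKI).prodMk (by fun_prop)) |>.clm_apply
      ((hZ_cont.mono hKI).prodMk (by fun_prop)))
    fun x hx t' ht' => hF_deriv x (hK hx) t' (hI ht')
  have hS_near : (fun e => S e t) =ᶠ[𝓝 0]
      fun e => s₀ + ∫ t' in (0:ℝ)..t, f (S e t', u t' + e • v t') :=
    eventually_of_mem (Ioo_mem_nhds h0.1 h0.2) fun e he => hS_eq e he t ht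
  rw [(hZ 0 h0 t ht).unique ((hLeibniz.const_add s₀).congr_of_eventuallyEq hS_near)]
  refine intervalIntegral.integral_congr fun t' _ => ?_
  simpa using fderiv_apply_prodMk_eq_add (hdf (S 0 t', u t')) (Z 0 t') (v t')

/-- Let `f : ℝ^n × ℝ^m → ℝ^n` be C¹, `u, v : ℝ → ℝ^m` continuous,
`s₀ ∈ ℝ^n`, `T > 0`, `δ > 0`. Suppose `S : (−δ,δ) × [0,T] → ℝ^n` is continuous,
satisfies `S(ε,t) = s₀ + ∫₀ᵗ f(S(ε,t'), u(t') + ε·v(t')) dt'`, and the partial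
derivative `∂_ε S` exists and is continuous on `(−δ,δ) × [0,T]`. Then the first
variation `z(t) = ∂_ε S(ε,t)|_{ε=0}` satisfies the time-varying linear Volterra
integral equation `z(t) = ∫₀ᵗ [A(t')·z(t') + B(t')·v(t')] dt'`, where `A(t')`,
`B(t')` are the Jacobians of `f` in the state and control arguments evaluated
along the unperturbed trajectory. -/
theorem first_variation_satisfies_linear_volterra
    (n m : ℕ)
    (f : EuclideanSpace ℝ (Fin n) × EuclideanSpace ℝ (Fin m) → EuclideanSpace ℝ (Fin n))
    (hf : ContDiff ℝ 1 f)
    (u v : ℝ → EuclideanSpace ℝ (Fin m)) (hu : Continuous u) (hv : Continuous v)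
    (s₀ : EuclideanSpace ℝ (Fin n)) (T δ : ℝ) (hT : 0 < T) (hδ : 0 < δ)
    (S : ℝ → ℝ → EuclideanSpace ℝ (Fin n))
    (hS_cont : ContinuousOn (fun p : ℝ × ℝ => S p.1 p.2)
      (Set.Ioo (-δ) δ ×ˢ Set.Icc 0 T))
    (hS_eq : ∀ ε ∈ Set.Ioo (-δ) δ, ∀ t ∈ Set.Icc (0:ℝ) T,
      S ε t = s₀ + ∫ t' in (0:ℝ)..t, f (S ε t', u t' + ε • v t'))
    (Z : ℝ → ℝ → EuclideanSpace ℝ (Fin n))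
    (hZ : ∀ ε ∈ Set.Ioo (-δ) δ, ∀ t ∈ Set.Icc (0:ℝ) T,
      HasDerivAt (fun e => S e t) (Z ε t) ε)
    (hZ_cont : ContinuousOn (fun p : ℝ × ℝ => Z p.1 p.2)
      (Set.Ioo (-δ) δ ×ˢ Set.Icc 0 T)) :
    ∀ t ∈ Set.Icc (0:ℝ) T,
      Z 0 t = ∫ t' in (0:ℝ)..t,
        ((fderiv ℝ (fun y => f (y, u t')) (S 0 t')) (Z 0 t')
          + (fderiv ℝ (fun w => f (S 0 t', w)) (u t')) (v t')) :=
  first_variation_satisfies_linear_volterra_general n m f hf u v hu hv s₀ T δ hδ S hS_cont hS_eq Z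
    hZ hZ_cont
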